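/- arXiv:1803.04808 — 9 statements merged into one kernel-verified Lean document; each statement's English description precedes it below -/
import Mathlib

section
/- Let (A, →, ⊤) be a BCI-algebra whose induced partial order ⪯ is a meet-semilattice with binary meet ∧, satisfying the adjunction condition (*): a ⪯ b→c iff a∧b ⪯ c, for all a, b, c ∈ A. Let 𝔸 = {(a,b) ∈ A×A : a ⪯ b} be the set of intervals over A, and for X, Y ∈ 𝔸 define X ⤇ Y = [(X̲→Y̲)∧(X̄→Ȳ), X̄→Ȳ]. Then (𝔸, ⤇, [⊤,⊤]) is again a BCI-algebra (satisfying C-1 through C-4), its induced order is the componentwise (Kulisch–Miranker) order, 𝔸 is a meet-semilattice under componentwise meet, and (𝔸, ⤇, [⊤,⊤]) satisfies condition (*) with respect to this meet. -/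
/-- Interval implication ⤇ : X ⤇ Y = [(X̲→Y̲)∧(X̄→Ȳ), X̄→Ȳ], 
represented on pairs of endpoints. -/
def intervalImp5 {A : Type*} (imp meet : A → A → A) (P Q : A × A) : A × A :=
  (meet (imp P.1 Q.1) (imp P.2 Q.2), imp P.2 Q.2)

/-- Componentwise meet of intervals, represented on pairs of endpoints. -/
def intervalMeet5 {A : Type*} (meet : A → A → A) (P Q : A × A) : A × A :=
  (meet P.1 Q.1, meet P.2 Q.2)

/-! The adjunction (*) makes `⊤` the greatest element of `A`, so a meet is `⊤` only if both of
its arguments are; hence `X ⤇ Y = [⊤,⊤]` iff `X̲ ⪯ Y̲` and `X̄ ⪯ Ȳ`. This turns every claim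
about `𝔸` into a pair of inequalities in `A`: those on upper endpoints are the corresponding
laws of `A`, and those on lower endpoints follow from the monotonicity of `→` and `∧` together
with modus ponens in the form `c ⪯ a`, `c ⪯ a → b` ⟹ `c ⪯ b`. -/

structure IsBCIAlgebraWithAdjointMeet {A : Type*} (imp : A → A → A) (top : A)
    (meet : A → A → A) : Prop where
  c1 : ∀ x y z : A, imp (imp y z) (imp (imp z x) (imp y x)) = top
  c2 : ∀ x y : A, imp x (imp (imp x y) y) = top
  c3 : ∀ x : A, imp x x = top
  c4 : ∀ x y : A, imp x y = top → imp y x = top → x = y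
  meet_le_left : ∀ a b : A, imp (meet a b) a = top
  meet_le_right : ∀ a b : A, imp (meet a b) b = top
  le_meet : ∀ a b c : A, imp c a = top → imp c b = top → imp c (meet a b) = top
  adj : ∀ a b c : A, imp a (imp b c) = top ↔ imp (meet a b) c = top

namespace IsBCIAlgebraWithAdjointMeet

variable {A : Type*} {imp : A → A → A} {top : A} {meet : A → A → A}

local notation:50 x:51 " ⪯ " y:51 => imp x y = top

theorem le_top (h : IsBCIAlgebraWithAdjointMeet imp top meet) (a : A) : a ⪯ top := by
  have := (h.adj a a a).mpr (h.meet_le_right a a)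
  rwa [h.c3] at this

theorem eq_top_of_top_le (h : IsBCIAlgebraWithAdjointMeet imp top meet) {a : A}
    (ha : top ⪯ a) : a = top :=
  h.c4 _ _ (h.le_top a) ha

theorem imp_le_imp_of_le (h : IsBCIAlgebraWithAdjointMeet imp top meet) {a b : A}
    (hab : a ⪯ b) (c : A) : imp b c ⪯ imp a c := by
  have := h.c1 c a b
  rw [hab] at this
  exact h.eq_top_of_top_le this

theorem le_trans (h : IsBCIAlgebraWithAdjointMeet imp top meet) {a b c : A}
    (hab : a ⪯ b) (hbc : b ⪯ c) : a ⪯ c := by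
  have := h.imp_le_imp_of_le hab c
  rw [hbc] at this
  exact h.eq_top_of_top_le this

theorem le_of_le_of_le_imp (h : IsBCIAlgebraWithAdjointMeet imp top meet) {a b c : A}
    (hca : c ⪯ a) (hcab : c ⪯ imp a b) : c ⪯ b :=
  h.le_trans (h.le_meet c a c (h.c3 c) hca) ((h.adj c a b).mp hcab)

theorem meet_le_meet (h : IsBCIAlgebraWithAdjointMeet imp top meet) {a a' b b' : A}
    (ha : a ⪯ a') (hb : b ⪯ b') : meet a b ⪯ meet a' b' :=
  h.le_meet _ _ _ (h.le_trans (h.meet_le_left a b) ha) (h.le_trans (h.meet_le_right a b) hb)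

theorem meet_imp_le_imp_meet (h : IsBCIAlgebraWithAdjointMeet imp top meet) (a b c d : A) :
    meet (imp a b) (imp c d) ⪯ imp (meet a c) (meet b d) := by
  rw [h.adj]
  set n := meet (meet (imp a b) (imp c d)) (meet a c)
  have hn₁ : n ⪯ meet (imp a b) (imp c d) := h.meet_le_left _ _
  have hn₂ : n ⪯ meet a c := h.meet_le_right _ _
  exact h.le_meet _ _ _
    (h.le_of_le_of_le_imp (h.le_trans hn₂ (h.meet_le_left a c))
      (h.le_trans hn₁ (h.meet_le_left _ _)))
    (h.le_of_le_of_le_imp (h.le_trans hn₂ (h.meet_le_right a c))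
      (h.le_trans hn₁ (h.meet_le_right _ _)))

theorem meet_top_top (h : IsBCIAlgebraWithAdjointMeet imp top meet) : meet top top = top :=
  h.eq_top_of_top_le (h.le_meet _ _ _ (h.c3 top) (h.c3 top))

theorem intervalImp5_eq_top_iff (h : IsBCIAlgebraWithAdjointMeet imp top meet) (X Y : A × A) :
    intervalImp5 imp meet X Y = (top, top) ↔ X.1 ⪯ Y.1 ∧ X.2 ⪯ Y.2 := by
  simp only [intervalImp5, Prod.mk.injEq]
  constructor
  · rintro ⟨h₁, h₂⟩
    have := h.meet_le_left (imp X.1 Y.1) (imp X.2 Y.2)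
    rw [h₁] at this
    exact ⟨h.eq_top_of_top_le this, h₂⟩
  · rintro ⟨h₁, h₂⟩
    rw [h₁, h₂, h.meet_top_top]
    exact ⟨rfl, rfl⟩

theorem intervalImp5_c1 (h : IsBCIAlgebraWithAdjointMeet imp top meet) (X Y Z : A × A) :
    intervalImp5 imp meet (intervalImp5 imp meet Y Z)
      (intervalImp5 imp meet (intervalImp5 imp meet Z X) (intervalImp5 imp meet Y X)) =
      (top, top) := by
  rw [h.intervalImp5_eq_top_iff]
  refine ⟨h.le_meet _ _ _ ?_ (h.le_trans (h.meet_le_right _ _) (h.c1 X.2 Y.2 Z.2)),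
    h.c1 X.2 Y.2 Z.2⟩
  exact h.le_trans (h.meet_le_meet (h.c1 X.1 Y.1 Z.1) (h.c1 X.2 Y.2 Z.2))
    (h.meet_imp_le_imp_meet _ _ _ _)

theorem intervalImp5_c2 (h : IsBCIAlgebraWithAdjointMeet imp top meet) {X : A × A}
    (hX : X.1 ⪯ X.2) (Y : A × A) :
    intervalImp5 imp meet X (intervalImp5 imp meet (intervalImp5 imp meet X Y) Y) =
      (top, top) := by
  rw [h.intervalImp5_eq_top_iff]
  refine ⟨h.le_meet _ _ _ ?_ (h.le_trans hX (h.c2 X.2 Y.2)), h.c2 X.2 Y.2⟩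
  exact h.le_trans (h.c2 X.1 Y.1) (h.imp_le_imp_of_le (h.meet_le_left _ _) Y.1)

theorem intervalImp5_c4 (h : IsBCIAlgebraWithAdjointMeet imp top meet) {X Y : A × A}
    (hXY : intervalImp5 imp meet X Y = (top, top))
    (hYX : intervalImp5 imp meet Y X = (top, top)) : X = Y := by
  obtain ⟨h₁, h₂⟩ := (h.intervalImp5_eq_top_iff X Y).mp hXY
  obtain ⟨h₃, h₄⟩ := (h.intervalImp5_eq_top_iff Y X).mp hYX
  exact Prod.ext (h.c4 _ _ h₁ h₃) (h.c4 _ _ h₂ h₄)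

theorem intervalImp5_intervalMeet5_left (h : IsBCIAlgebraWithAdjointMeet imp top meet)
    (X Y : A × A) : intervalImp5 imp meet (intervalMeet5 meet X Y) X = (top, top) :=
  (h.intervalImp5_eq_top_iff _ _).mpr ⟨h.meet_le_left _ _, h.meet_le_left _ _⟩

theorem intervalImp5_intervalMeet5_right (h : IsBCIAlgebraWithAdjointMeet imp top meet)
    (X Y : A × A) : intervalImp5 imp meet (intervalMeet5 meet X Y) Y = (top, top) :=
  (h.intervalImp5_eq_top_iff _ _).mpr ⟨h.meet_le_right _ _, h.meet_le_right _ _⟩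

theorem intervalImp5_le_intervalMeet5 (h : IsBCIAlgebraWithAdjointMeet imp top meet)
    {X Y Z : A × A} (hZX : intervalImp5 imp meet Z X = (top, top))
    (hZY : intervalImp5 imp meet Z Y = (top, top)) :
    intervalImp5 imp meet Z (intervalMeet5 meet X Y) = (top, top) := by
  obtain ⟨h₁, h₂⟩ := (h.intervalImp5_eq_top_iff Z X).mp hZX
  obtain ⟨h₃, h₄⟩ := (h.intervalImp5_eq_top_iff Z Y).mp hZY
  exact (h.intervalImp5_eq_top_iff _ _).mpr ⟨h.le_meet _ _ _ h₁ h₃, h.le_meet _ _ _ h₂ h₄⟩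

theorem intervalImp5_adj (h : IsBCIAlgebraWithAdjointMeet imp top meet) {X : A × A}
    (hX : X.1 ⪯ X.2) (Y Z : A × A) :
    intervalImp5 imp meet X (intervalImp5 imp meet Y Z) = (top, top) ↔
      intervalImp5 imp meet (intervalMeet5 meet X Y) Z = (top, top) := by
  rw [h.intervalImp5_eq_top_iff, h.intervalImp5_eq_top_iff]
  simp only [intervalImp5, intervalMeet5]
  constructor
  · rintro ⟨h₁, h₂⟩
    exact ⟨(h.adj _ _ _).mp (h.le_trans h₁ (h.meet_le_left _ _)), (h.adj _ _ _).mp h₂⟩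
  · rintro ⟨h₁, h₂⟩
    have h₂' := (h.adj _ _ _).mpr h₂
    exact ⟨h.le_meet _ _ _ ((h.adj _ _ _).mpr h₁) (h.le_trans hX h₂'), h₂'⟩

end IsBCIAlgebraWithAdjointMeet

/-- intervalization of a BCI-algebra with meet satisfying the
adjunction (*) yields a BCI-algebra (𝔸, ⤇, [⊤,⊤]) whose induced order is the
Kulisch–Miranker order, which is a meet-semilattice under componentwise meet
and again satisfies (*). Intervals are pairs (X̲, X̄) with X̲ ⪯ X̄,
where x ⪯ y iff x→y = ⊤. -/
theorem stmt_5 {A : Type*} (imp : A → A → A) (top : A) (meet : A → A → A)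
    (c1 : ∀ x y z : A, imp (imp y z) (imp (imp z x) (imp y x)) = top)
    (c2 : ∀ x y : A, imp x (imp (imp x y) y) = top)
    (c3 : ∀ x : A, imp x x = top)
    (c4 : ∀ x y : A, imp x y = top → imp y x = top → x = y)
    (meet_le_left : ∀ a b : A, imp (meet a b) a = top)
    (meet_le_right : ∀ a b : A, imp (meet a b) b = top)
    (le_meet : ∀ a b c : A, imp c a = top → imp c b = top → imp c (meet a b) = top)
    (adj : ∀ a b c : A, imp a (imp b c) = top ↔ imp (meet a b) c = top) :
    -- ⤇ maps intervals to intervals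
    (∀ X Y : A × A, imp X.1 X.2 = top → imp Y.1 Y.2 = top →
      imp (intervalImp5 imp meet X Y).1 (intervalImp5 imp meet X Y).2 = top) ∧
    -- (C-1)
    (∀ X Y Z : A × A, imp X.1 X.2 = top → imp Y.1 Y.2 = top → imp Z.1 Z.2 = top →
      intervalImp5 imp meet (intervalImp5 imp meet Y Z)
        (intervalImp5 imp meet (intervalImp5 imp meet Z X)
          (intervalImp5 imp meet Y X)) = (top, top)) ∧
    -- (C-2)
    (∀ X Y : A × A, imp X.1 X.2 = top → imp Y.1 Y.2 = top →
      intervalImp5 imp meet X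
        (intervalImp5 imp meet (intervalImp5 imp meet X Y) Y) = (top, top)) ∧
    -- (C-3)
    (∀ X : A × A, imp X.1 X.2 = top → intervalImp5 imp meet X X = (top, top)) ∧
    -- (C-4)
    (∀ X Y : A × A, imp X.1 X.2 = top → imp Y.1 Y.2 = top →
      intervalImp5 imp meet X Y = (top, top) →
      intervalImp5 imp meet Y X = (top, top) → X = Y) ∧
    -- the induced order is the componentwise (Kulisch–Miranker) order
    (∀ X Y : A × A, imp X.1 X.2 = top → imp Y.1 Y.2 = top →
      (intervalImp5 imp meet X Y = (top, top) ↔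
        (imp X.1 Y.1 = top ∧ imp X.2 Y.2 = top))) ∧
    -- 𝔸 is a meet-semilattice under componentwise meet
    (∀ X Y : A × A, imp X.1 X.2 = top → imp Y.1 Y.2 = top →
      imp (intervalMeet5 meet X Y).1 (intervalMeet5 meet X Y).2 = top ∧
      intervalImp5 imp meet (intervalMeet5 meet X Y) X = (top, top) ∧
      intervalImp5 imp meet (intervalMeet5 meet X Y) Y = (top, top) ∧
      (∀ Z : A × A, imp Z.1 Z.2 = top →
        intervalImp5 imp meet Z X = (top, top) →
        intervalImp5 imp meet Z Y = (top, top) →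
        intervalImp5 imp meet Z (intervalMeet5 meet X Y) = (top, top))) ∧
    -- condition (*) for (𝔸, ⤇, [⊤,⊤])
    (∀ X Y Z : A × A, imp X.1 X.2 = top → imp Y.1 Y.2 = top → imp Z.1 Z.2 = top →
      (intervalImp5 imp meet X (intervalImp5 imp meet Y Z) = (top, top) ↔
        intervalImp5 imp meet (intervalMeet5 meet X Y) Z = (top, top))) := by
  have h : IsBCIAlgebraWithAdjointMeet imp top meet :=
    ⟨c1, c2, c3, c4, meet_le_left, meet_le_right, le_meet, adj⟩
  refine ⟨fun X Y _ _ => meet_le_right _ _,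
    fun X Y Z _ _ _ => h.intervalImp5_c1 X Y Z,
    fun X Y hX _ => h.intervalImp5_c2 hX Y,
    fun X _ => (h.intervalImp5_eq_top_iff X X).mpr ⟨c3 X.1, c3 X.2⟩,
    fun X Y _ _ => h.intervalImp5_c4,
    fun X Y _ _ => h.intervalImp5_eq_top_iff X Y,
    fun X Y hX hY => ⟨h.meet_le_meet hX hY, h.intervalImp5_intervalMeet5_left X Y,
      h.intervalImp5_intervalMeet5_right X Y, fun Z _ => h.intervalImp5_le_intervalMeet5⟩,
    fun X Y Z hX _ _ => h.intervalImp5_adj hX Y Z⟩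
end

section
/- Let (A, →, ⊤) be a BCI-algebra with induced partial order ⪯, and suppose there exist a, b ∈ A with a ≠ b and a→b = ⊤. Let 𝔸 = {(a,b) ∈ A×A : a ⪯ b} be the set of intervals over A. Then for every interval D ∈ 𝔸 and every binary operation ↣ on 𝔸 that is an interval representation of → (that is, for all X, Y ∈ 𝔸 and all x, y ∈ A with X̲ ⪯ x ⪯ X̄ and Y̲ ⪯ y ⪯ Ȳ, one has lower endpoint of X↣Y ⪯ x→y ⪯ upper endpoint of X↣Y), the structure (𝔸, ↣, D) is not a BCI-algebra (i.e., fails at least one of axioms C-1 through C-4). -/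
/-!
In any BCI-algebra the unit is a left identity, so `D ↣ X = X` for every interval `X`.
Since `[a, b] ↣ [a, b] = D` and `b → a` is an instance of `[a, b] → [a, b]`, the element
`b → a` lies in `D`; hence `(b → a) → a` lies in `D ↣ [a, a] = [a, a]`, i.e. `(b → a) → a = a`.
But `b ⪯ (b → a) → a` by (C-2), so `b ⪯ a` and `a = b`.
-/

/-- The set of intervals over a BCI-algebra: pairs of endpoints (X̲, X̄)
with X̲ ⪯ X̄, where x ⪯ y iff x→y = ⊤. -/
def Itv6 {A : Type*} (imp : A → A → A) (top : A) : Type _ :=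
  {p : A × A // imp p.1 p.2 = top}

theorem eq_of_unit_imp_eq_unit {B : Type*} (op : B → B → B) (e : B)
    (c2 : ∀ x y : B, op x (op (op x y) y) = e) (c3 : ∀ x : B, op x x = e)
    (c4 : ∀ x y : B, op x y = e → op y x = e → x = y) {x : B} (hx : op e x = e) : x = e := by
  have h := c2 x x
  rw [c3 x, hx] at h
  exact c4 x e h hx

theorem unit_imp_eq {B : Type*} (op : B → B → B) (e : B)
    (c2 : ∀ x y : B, op x (op (op x y) y) = e) (c3 : ∀ x : B, op x x = e)
    (c4 : ∀ x y : B, op x y = e → op y x = e → x = y) (x : B) : op e x = x := by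
  have hle : op (op e x) x = e := eq_of_unit_imp_eq_unit op e c2 c3 c4 (c2 e x)
  have hge : op x (op e x) = e := by simpa only [c3 x] using c2 x x
  exact c4 _ _ hle hge

theorem stmt_6_general {A : Type*} (imp : A → A → A) (top : A)
    (c2 : ∀ x y : A, imp x (imp (imp x y) y) = top)
    (c3 : ∀ x : A, imp x x = top)
    (c4 : ∀ x y : A, imp x y = top → imp y x = top → x = y)
    (a b : A) (hab : a ≠ b) (hab_le : imp a b = top)
    (D : Itv6 imp top)
    (arr : Itv6 imp top → Itv6 imp top → Itv6 imp top)
    (hrep : ∀ X Y : Itv6 imp top, ∀ x y : A,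
      imp X.val.1 x = top → imp x X.val.2 = top →
      imp Y.val.1 y = top → imp y Y.val.2 = top →
      imp (arr X Y).val.1 (imp x y) = top ∧ imp (imp x y) (arr X Y).val.2 = top) :
    ¬ ((∀ X Y Z : Itv6 imp top,
          arr (arr Y Z) (arr (arr Z X) (arr Y X)) = D) ∧
       (∀ X Y : Itv6 imp top, arr X (arr (arr X Y) Y) = D) ∧
       (∀ X : Itv6 imp top, arr X X = D) ∧
       (∀ X Y : Itv6 imp top, arr X Y = D → arr Y X = D → X = Y)) := by
  rintro ⟨-, h2, h3, h4⟩
  let Iab : Itv6 imp top := ⟨(a, b), hab_le⟩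
  let Iaa : Itv6 imp top := ⟨(a, a), c3 a⟩
  obtain ⟨hD_le, hle_D⟩ : imp D.val.1 (imp b a) = top ∧ imp (imp b a) D.val.2 = top := by
    simpa only [h3 Iab] using hrep Iab Iab b a hab_le (c3 b) (c3 a) hab_le
  have hmem := hrep D Iaa (imp b a) a hD_le hle_D (c3 a) (c3 a)
  rw [unit_imp_eq arr D h2 h3 h4 Iaa] at hmem
  have hba : imp (imp b a) a = a := c4 _ _ hmem.2 hmem.1
  exact hab (c4 a b hab_le (hba ▸ c2 b a))

/-- If a BCI-algebra (A, →, ⊤) has a ≠ b with a→b = ⊤, then for no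
interval D and no interval representation ↣ of → is (𝔸, ↣, D) a BCI-algebra. -/
theorem stmt_6 {A : Type*} (imp : A → A → A) (top : A)
    (c1 : ∀ x y z : A, imp (imp y z) (imp (imp z x) (imp y x)) = top)
    (c2 : ∀ x y : A, imp x (imp (imp x y) y) = top)
    (c3 : ∀ x : A, imp x x = top)
    (c4 : ∀ x y : A, imp x y = top → imp y x = top → x = y)
    (a b : A) (hab : a ≠ b) (hab_le : imp a b = top)
    (D : Itv6 imp top)
    (arr : Itv6 imp top → Itv6 imp top → Itv6 imp top)
    (hrep : ∀ X Y : Itv6 imp top, ∀ x y : A,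
      imp X.val.1 x = top → imp x X.val.2 = top →
      imp Y.val.1 y = top → imp y Y.val.2 = top →
      imp (arr X Y).val.1 (imp x y) = top ∧ imp (imp x y) (arr X Y).val.2 = top) :
    ¬ ((∀ X Y Z : Itv6 imp top,
          arr (arr Y Z) (arr (arr Z X) (arr Y X)) = D) ∧
       (∀ X Y : Itv6 imp top, arr X (arr (arr X Y) Y) = D) ∧
       (∀ X : Itv6 imp top, arr X X = D) ∧
       (∀ X Y : Itv6 imp top, arr X Y = D → arr Y X = D → X = Y)) :=
  stmt_6_general imp top c2 c3 c4 a b hab hab_le D arr hrep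
end

section
/- Let (A, →, ⊤) be a BCI-algebra whose induced partial order ⪯ is a meet-semilattice with meet ∧ satisfying x→(y∧z) = (x→y)∧(x→z) for all x, y, z ∈ A. Let 𝔸 = {(a,b) ∈ A×A : a ⪯ b} and for X, Y ∈ 𝔸 define X ⇒ Y = [(X̲→Y̲)∧(X̄→Ȳ), X̲→Ȳ]. Then for all X, Y, Z ∈ 𝔸: X ⇒ (Y ⇒ Z) = Y ⇒ (X ⇒ Z). -/
/-!
In a BCI-algebra `⊤ → x = x`, and with it `→` satisfies the exchange law
`x → (y → z) = y → (x → z)`. Distributing `→` over `∧`, the upper endpoints of both sides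
of the claim are `X̲ → (Y̲ → Z̄)` and `Y̲ → (X̲ → Z̄)`, equal by exchange, while after exchange
the lower endpoints are meets of the same three elements, taken in two different orders.
-/

/-- The interval implication ⇒ : X ⇒ Y = [(X̲→Y̲)∧(X̄→Ȳ), X̲→Ȳ],
represented on pairs of endpoints. -/
def intervalImp8 {A : Type*} (imp meet : A → A → A) (P Q : A × A) : A × A :=
  (meet (imp P.1 Q.1) (imp P.2 Q.2), imp P.1 Q.2)

structure IsBCIAlgebra {A : Type*} (imp : A → A → A) (top : A) : Prop where
  imp_imp_imp : ∀ x y z : A, imp (imp y z) (imp (imp z x) (imp y x)) = top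
  imp_imp_imp_self : ∀ x y : A, imp x (imp (imp x y) y) = top
  imp_self : ∀ x : A, imp x x = top
  antisymm : ∀ x y : A, imp x y = top → imp y x = top → x = y

namespace IsBCIAlgebra

variable {A : Type*} {imp : A → A → A} {top : A}

theorem imp_top_of_top_imp (h : IsBCIAlgebra imp top) {w : A} (hw : imp top w = top) :
    imp w top = top := by
  have h_imp_top_imp_top : imp (imp w top) top = top := by
    have h_c1 := h.imp_imp_imp w w top
    rwa [hw, h.imp_self, h.imp_self] at h_c1
  simpa only [h_imp_top_imp_top] using h.imp_imp_imp_self w top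

theorem top_imp (h : IsBCIAlgebra imp top) (x : A) : imp top x = x := by
  have h_le : imp x (imp top x) = top := by
    simpa only [h.imp_self] using h.imp_imp_imp_self x x
  have h_ge : imp (imp top x) x = top :=
    h.antisymm _ _ (h.imp_top_of_top_imp (h.imp_imp_imp_self top x)) (h.imp_imp_imp_self top x)
  exact h.antisymm _ _ h_ge h_le

theorem imp_trans (h : IsBCIAlgebra imp top) {a b c : A} (hab : imp a b = top)
    (hbc : imp b c = top) : imp a c = top := by
  simpa only [hab, hbc, h.top_imp] using h.imp_imp_imp c a b

theorem imp_left_comm_le (h : IsBCIAlgebra imp top) (a b c : A) :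
    imp (imp a (imp b c)) (imp b (imp a c)) = top := by
  refine h.imp_trans (h.imp_imp_imp c a (imp b c)) ?_
  simpa only [h.imp_imp_imp_self b c, h.top_imp] using
    h.imp_imp_imp (imp a c) b (imp (imp b c) c)

theorem imp_left_comm (h : IsBCIAlgebra imp top) (a b c : A) :
    imp a (imp b c) = imp b (imp a c) :=
  h.antisymm _ _ (h.imp_left_comm_le a b c) (h.imp_left_comm_le b a c)

theorem meet_right_comm (h : IsBCIAlgebra imp top) {meet : A → A → A}
    (meet_le_left : ∀ a b : A, imp (meet a b) a = top)
    (meet_le_right : ∀ a b : A, imp (meet a b) b = top)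
    (le_meet : ∀ a b c : A, imp c a = top → imp c b = top → imp c (meet a b) = top)
    (a b c : A) : meet (meet a b) c = meet (meet a c) b :=
  letI : SemilatticeInf A :=
    { le x y := imp x y = top
      le_refl := h.imp_self
      le_trans _ _ _ := h.imp_trans
      le_antisymm := h.antisymm
      inf := meet
      inf_le_left := meet_le_left
      inf_le_right := meet_le_right
      le_inf := fun a b c => le_meet b c a }
  inf_right_comm a b c

end IsBCIAlgebra

/-- In the intervalization of a BCI-algebra with meet distributing
over →, the operation ⇒ satisfies the exchange law
X ⇒ (Y ⇒ Z) = Y ⇒ (X ⇒ Z). Intervals are pairs (X̲, X̄) with X̲ ⪯ X̄. -/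
theorem stmt_8 {A : Type*} (imp : A → A → A) (top : A) (meet : A → A → A)
    (c1 : ∀ x y z : A, imp (imp y z) (imp (imp z x) (imp y x)) = top)
    (c2 : ∀ x y : A, imp x (imp (imp x y) y) = top)
    (c3 : ∀ x : A, imp x x = top)
    (c4 : ∀ x y : A, imp x y = top → imp y x = top → x = y)
    (meet_le_left : ∀ a b : A, imp (meet a b) a = top)
    (meet_le_right : ∀ a b : A, imp (meet a b) b = top)
    (le_meet : ∀ a b c : A, imp c a = top → imp c b = top → imp c (meet a b) = top)
    (hdist : ∀ x y z : A, imp x (meet y z) = meet (imp x y) (imp x z)) :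
    ∀ X Y Z : A × A,
      imp X.1 X.2 = top → imp Y.1 Y.2 = top → imp Z.1 Z.2 = top →
      intervalImp8 imp meet X (intervalImp8 imp meet Y Z) =
        intervalImp8 imp meet Y (intervalImp8 imp meet X Z) := by
  have hA : IsBCIAlgebra imp top := ⟨c1, c2, c3, c4⟩
  intro X Y Z _ _ _
  refine Prod.ext ?_ (hA.imp_left_comm X.1 Y.1 Z.2)
  simp only [intervalImp8, hdist, hA.imp_left_comm X.1, hA.imp_left_comm X.2]
  exact hA.meet_right_comm meet_le_left meet_le_right le_meet _ _ _
end

section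
/- Let (A, →, ⊤) be a BCI-algebra whose induced partial order ⪯ is a meet-semilattice with meet ∧, and suppose A contains at least one element a with a ≠ ⊤. Let 𝔸 = {(a,b) ∈ A×A : a ⪯ b} and for X, Y ∈ 𝔸 define X ⇛ Y = [X̄→Y̲, X̲→Ȳ]. Then (𝔸, ⇛, [⊤,⊤]) is not a BCI-algebra; in particular there exists X ∈ 𝔸 (e.g., X = [a∧⊤, ⊤]) with X ⇛ X ≠ [⊤,⊤], so axiom C-3 fails. -/
/-- The best interval representation ⇛ : X ⇛ Y = [X̄→Y̲, X̲→Ȳ],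
represented on pairs of endpoints. -/
def intervalArr10 {A : Type*} (imp : A → A → A) (P Q : A × A) : A × A :=
  (imp P.2 Q.1, imp P.1 Q.2)

/-! In a BCI-algebra ⊤ is maximal: from ⊤ ⪯ a, axioms C-2 and C-3 give a ⪯ ⊤, so a = ⊤.
For X = [a∧⊤, ⊤] the lower endpoint of X ⇛ X is ⊤ → a∧⊤, which is ⊤ only if ⊤ ⪯ a∧⊤ ⪯ a,
that is, only if a = ⊤. -/

section BCI

variable {A : Type*} {imp : A → A → A} {top : A}

theorem imp_top_eq_top_of_top_imp_eq_top (c2 : ∀ x y : A, imp x (imp (imp x y) y) = top)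
    (c3 : ∀ x : A, imp x x = top) {a : A} (h : imp top a = top) : imp a top = top := by
  simpa only [c3, h] using c2 a a

theorem eq_top_of_top_imp_eq_top (c2 : ∀ x y : A, imp x (imp (imp x y) y) = top)
    (c3 : ∀ x : A, imp x x = top) (c4 : ∀ x y : A, imp x y = top → imp y x = top → x = y)
    {a : A} (h : imp top a = top) : a = top :=
  c4 a top (imp_top_eq_top_of_top_imp_eq_top c2 c3 h) h

end BCI

theorem stmt_10_general {A : Type*} (imp : A → A → A) (top : A) (meet : A → A → A)
    (c2 : ∀ x y : A, imp x (imp (imp x y) y) = top)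
    (c3 : ∀ x : A, imp x x = top)
    (c4 : ∀ x y : A, imp x y = top → imp y x = top → x = y)
    (meet_le_left : ∀ a b : A, imp (meet a b) a = top)
    (meet_le_right : ∀ a b : A, imp (meet a b) b = top)
    (a : A) (ha : a ≠ top) :
    imp (meet a top) top = top ∧
    intervalArr10 imp (meet a top, top) (meet a top, top) ≠ (top, top) ∧
    ¬ (∀ X : A × A, imp X.1 X.2 = top → intervalArr10 imp X X = (top, top)) := by
  have hX : imp (meet a top) top = top := meet_le_right a top
  have hXX : intervalArr10 imp (meet a top, top) (meet a top, top) ≠ (top, top) := by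
    intro h
    have hmeet : meet a top = top := eq_top_of_top_imp_eq_top c2 c3 c4 (congrArg Prod.fst h)
    exact ha (eq_top_of_top_imp_eq_top c2 c3 c4 (by simpa only [hmeet] using meet_le_left a top))
  exact ⟨hX, hXX, fun h => hXX (h _ hX)⟩

/-- If a BCI-algebra whose induced order is a meet-semilattice has
an element a ≠ ⊤, then (𝔸, ⇛, [⊤,⊤]) is not a BCI-algebra: the interval
X = [a∧⊤, ⊤] is a genuine interval with X ⇛ X ≠ [⊤,⊤], so axiom C-3 fails. -/
theorem stmt_10 {A : Type*} (imp : A → A → A) (top : A) (meet : A → A → A)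
    (c1 : ∀ x y z : A, imp (imp y z) (imp (imp z x) (imp y x)) = top)
    (c2 : ∀ x y : A, imp x (imp (imp x y) y) = top)
    (c3 : ∀ x : A, imp x x = top)
    (c4 : ∀ x y : A, imp x y = top → imp y x = top → x = y)
    (meet_le_left : ∀ a b : A, imp (meet a b) a = top)
    (meet_le_right : ∀ a b : A, imp (meet a b) b = top)
    (le_meet : ∀ a b c : A, imp c a = top → imp c b = top → imp c (meet a b) = top)
    (a : A) (ha : a ≠ top) :
    imp (meet a top) top = top ∧
    intervalArr10 imp (meet a top, top) (meet a top, top) ≠ (top, top) ∧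
    ¬ (∀ X : A × A, imp X.1 X.2 = top → intervalArr10 imp X X = (top, top)) :=
  stmt_10_general imp top meet c2 c3 c4 meet_le_left meet_le_right a ha
end

section
/- On the real unit interval [0,1], define x ↠ y = 1 − x + x·y (the Reichenbach implication) and x → y = min(1, 1 − x + y) (the Łukasiewicz implication), and set ⊤ = 1. Then ([0,1], ↠, →, 1) is a Semi-BCI algebra, i.e., for all x, y, z ∈ [0,1]: (SBCI1) x↠(y↠z) = y↠(x↠z); (SBCI2) x→(y→z) = y→(x→z); (SBCI3) (x↠y)→((z↠x)→(z↠y)) = 1; (SBCI4) 1↠x = x; (SBCI5) if x↠y = 1 and y→z = 1 then x↠z = 1; (SBCI6) if x→y = 1 and y↠z = 1 then x↠z = 1; (SBCI7) if x→y = 1 and y→x = 1 then x = y. -/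
/-!
The Reichenbach implication is `x ↠ y = 1 - x (1 - y)`, so `x ↠ y = 1` exactly when `x = 0` or
`y = 1`, and (SBCI1) is a ring identity. The Łukasiewicz implication satisfies
`x → y = 1 ↔ x ≤ y`, which turns (SBCI3), (SBCI5)–(SBCI7) into order statements, and
`x → (y → z) = min 1 (2 - x - y + z)` for `x ≤ 1` gives (SBCI2). Since
`(z ↠ y) - (z ↠ x) = z (y - x)`, (SBCI3) reduces to `0 ≤ x (1 - y) + z (y - x)`, a sum of two
nonnegative terms when `x ≤ y`, and equal to `(1 - z) (x - y) + y (1 - x)` otherwise.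
-/

namespace SemiBCI

variable {α : Type*}

def reichenbachImp [CommRing α] (x y : α) : α := 1 - x + x * y

def lukasiewiczImp [Ring α] [LinearOrder α] (x y : α) : α := min 1 (1 - x + y)

section CommRing

variable [CommRing α]

theorem one_reichenbachImp (x : α) : reichenbachImp 1 x = x := by
  simp [reichenbachImp]

theorem reichenbachImp_left_comm (x y z : α) :
    reichenbachImp x (reichenbachImp y z) = reichenbachImp y (reichenbachImp x z) := by
  simp only [reichenbachImp]; ring

theorem reichenbachImp_sub_reichenbachImp (z x y : α) :
    reichenbachImp z y - reichenbachImp z x = z * (y - x) := by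
  simp only [reichenbachImp]; ring

theorem reichenbachImp_eq_one_iff [NoZeroDivisors α] {x y : α} :
    reichenbachImp x y = 1 ↔ x = 0 ∨ y = 1 := by
  have : reichenbachImp x y - 1 = x * (y - 1) := by simp only [reichenbachImp]; ring
  rw [← sub_eq_zero, this, mul_eq_zero, sub_eq_zero]

end CommRing

section Ordered

variable [CommRing α] [LinearOrder α] [IsStrictOrderedRing α] {x y z : α}

theorem reichenbachImp_mem_Icc (hx : x ∈ Set.Icc 0 1) (hy : y ∈ Set.Icc 0 1) :
    reichenbachImp x y ∈ Set.Icc 0 1 := by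
  obtain ⟨hx0, hx1⟩ := hx
  obtain ⟨hy0, hy1⟩ := hy
  have hxy : x * (1 - y) ≤ 1 := mul_le_one₀ hx1 (by linarith) (by linarith)
  have : 0 ≤ x * (1 - y) := mul_nonneg hx0 (by linarith)
  constructor <;> simp only [reichenbachImp] <;> linarith

theorem lukasiewiczImp_mem_Icc (hx : x ≤ 1) (hy : 0 ≤ y) :
    lukasiewiczImp x y ∈ Set.Icc 0 1 :=
  ⟨le_min zero_le_one (by linarith), min_le_left _ _⟩

theorem lukasiewiczImp_eq_one_iff : lukasiewiczImp x y = 1 ↔ x ≤ y := by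
  rw [lukasiewiczImp, min_eq_left_iff]
  constructor <;> intro h <;> linarith

theorem lukasiewiczImp_lukasiewiczImp (hx : x ≤ 1) :
    lukasiewiczImp x (lukasiewiczImp y z) = min 1 (2 - x - y + z) := by
  simp only [lukasiewiczImp, min_def]
  split_ifs <;> linarith

theorem lukasiewiczImp_left_comm (hx : x ≤ 1) (hy : y ≤ 1) :
    lukasiewiczImp x (lukasiewiczImp y z) = lukasiewiczImp y (lukasiewiczImp x z) := by
  rw [lukasiewiczImp_lukasiewiczImp hx, lukasiewiczImp_lukasiewiczImp hy, sub_right_comm]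

theorem reichenbachImp_le_lukasiewiczImp (hx : x ∈ Set.Icc 0 1) (hy : y ∈ Set.Icc 0 1)
    (hz : z ∈ Set.Icc 0 1) :
    reichenbachImp x y ≤ lukasiewiczImp (reichenbachImp z x) (reichenbachImp z y) := by
  refine le_min (reichenbachImp_mem_Icc hx hy).2 ?_
  obtain ⟨hx0, hx1⟩ := hx
  obtain ⟨hy0, hy1⟩ := hy
  obtain ⟨hz0, hz1⟩ := hz
  have hgap : 0 ≤ x * (1 - y) + z * (y - x) := by
    rcases le_total x y with hxy | hyx
    · exact add_nonneg (mul_nonneg hx0 (sub_nonneg.2 hy1)) (mul_nonneg hz0 (sub_nonneg.2 hxy))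
    · rw [show x * (1 - y) + z * (y - x) = (1 - z) * (x - y) + y * (1 - x) by ring]
      exact add_nonneg (mul_nonneg (sub_nonneg.2 hz1) (sub_nonneg.2 hyx))
        (mul_nonneg hy0 (sub_nonneg.2 hx1))
  have hdiff := reichenbachImp_sub_reichenbachImp z x y
  simp only [reichenbachImp] at hdiff ⊢
  linarith

theorem reichenbachImp_eq_one_of_le_right (h : reichenbachImp x y = 1) (hyz : y ≤ z)
    (hz : z ≤ 1) : reichenbachImp x z = 1 := by
  rw [reichenbachImp_eq_one_iff] at h ⊢
  exact h.imp_right fun hy : y = 1 => le_antisymm hz (hy ▸ hyz)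

theorem reichenbachImp_eq_one_of_le_left (hx : 0 ≤ x) (hxy : x ≤ y)
    (h : reichenbachImp y z = 1) : reichenbachImp x z = 1 := by
  rw [reichenbachImp_eq_one_iff] at h ⊢
  exact h.imp_left fun hy : y = 0 => le_antisymm (hy ▸ hxy) hx

end Ordered

end SemiBCI

open SemiBCI

/-- ([0,1], ↠_R, →_LK, 1) is a Semi-BCI algebra, where
x ↠ y = 1 − x + x·y is the Reichenbach implication and
x → y = min(1, 1 − x + y) is the Łukasiewicz implication. -/
theorem stmt_14 :
    let R : ℝ → ℝ → ℝ := fun x y => 1 - x + x * y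
    let L : ℝ → ℝ → ℝ := fun x y => min 1 (1 - x + y)
    let I : Set ℝ := Set.Icc (0 : ℝ) 1
    -- the operations are well defined on [0,1]
    (∀ x ∈ I, ∀ y ∈ I, R x y ∈ I) ∧
    (∀ x ∈ I, ∀ y ∈ I, L x y ∈ I) ∧
    -- (SBCI1)
    (∀ x ∈ I, ∀ y ∈ I, ∀ z ∈ I, R x (R y z) = R y (R x z)) ∧
    -- (SBCI2)
    (∀ x ∈ I, ∀ y ∈ I, ∀ z ∈ I, L x (L y z) = L y (L x z)) ∧
    -- (SBCI3)
    (∀ x ∈ I, ∀ y ∈ I, ∀ z ∈ I, L (R x y) (L (R z x) (R z y)) = 1) ∧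
    -- (SBCI4)
    (∀ x ∈ I, R 1 x = x) ∧
    -- (SBCI5)
    (∀ x ∈ I, ∀ y ∈ I, ∀ z ∈ I, R x y = 1 → L y z = 1 → R x z = 1) ∧
    -- (SBCI6)
    (∀ x ∈ I, ∀ y ∈ I, ∀ z ∈ I, L x y = 1 → R y z = 1 → R x z = 1) ∧
    -- (SBCI7)
    (∀ x ∈ I, ∀ y ∈ I, L x y = 1 → L y x = 1 → x = y) := by
  intro R L I
  refine ⟨fun x hx y hy => reichenbachImp_mem_Icc hx hy,
    fun x hx y hy => lukasiewiczImp_mem_Icc hx.2 hy.1,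
    fun x _ y _ z _ => reichenbachImp_left_comm x y z,
    fun x hx y hy z _ => lukasiewiczImp_left_comm hx.2 hy.2,
    fun x hx y hy z hz => lukasiewiczImp_eq_one_iff.2 (reichenbachImp_le_lukasiewiczImp hx hy hz),
    fun x _ => one_reichenbachImp x,
    fun x _ y _ z hz hxy hyz =>
      reichenbachImp_eq_one_of_le_right hxy (lukasiewiczImp_eq_one_iff.1 hyz) hz.2,
    fun x hx y _ z _ hxy hyz =>
      reichenbachImp_eq_one_of_le_left hx.1 (lukasiewiczImp_eq_one_iff.1 hxy) hyz,
    fun x _ y _ hxy hyx => le_antisymm (lukasiewiczImp_eq_one_iff.1 hxy)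
      (lukasiewiczImp_eq_one_iff.1 hyx)⟩
end

section
/- Let (A, ↠, →, ⊤) be a Semi-BCI algebra, with x ≪ y iff x↠y = ⊤ and x ⪯ y iff x→y = ⊤. Then for all x, y, z ∈ A: (SBCI8) if x ≪ y and y ≪ z then x ≪ z; (SBCI9) if x ≪ y and y ≪ x then x = y; (SBCI10) (y↠z)→((z↠x)→(y↠x)) = ⊤; (SBCI11) if ⊤ ⪯ x then x = ⊤; (SBCI12) x→x = ⊤; (SBCI13) if x ≪ y then x ⪯ y; (SBCI14) (x↠y)→(x→y) = ⊤; (SBCI15) x→((x→y)→y) = ⊤; (SBCI16) if x ≪ y then x↠((x↠y)↠y) = ⊤; (SBCI17) if x ≪ y then (z↠x)→(z↠y) = ⊤; (SBCI18) if x ≪ y then (y↠z)→(x↠z) = ⊤. -/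
/-!
Everything follows from (SBCI11): since `⊤` is a left unit for `↠`, (SBCI5) with `x = y = ⊤`
turns `⊤ ⪯ x` into `x = ⊤`. The other properties come from (SBCI3), possibly with its premises
exchanged by (SBCI2): either specialise `z = ⊤`, or substitute a hypothesis `x ↠ y = ⊤`, and strip
the resulting leading `⊤ → _` with (SBCI11).
-/

section SemiBCI

variable {A : Type*} {arr imp : A → A → A} {top : A}

theorem eq_top_of_imp_top_eq_top (s4 : ∀ x : A, arr top x = x)
    (s5 : ∀ x y z : A, arr x y = top → imp y z = top → arr x z = top)
    {x : A} (h : imp top x = top) : x = top := by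
  simpa only [s4] using s5 top top x (s4 top) h

theorem imp_arr_imp_eq_top (s3 : ∀ x y z : A, imp (arr x y) (imp (arr z x) (arr z y)) = top)
    (s4 : ∀ x : A, arr top x = x) (x y : A) : imp (arr x y) (imp x y) = top := by
  simpa only [s4] using s3 x y top

theorem imp_self_eq_top (s2 : ∀ x y z : A, imp x (imp y z) = imp y (imp x z))
    (s3 : ∀ x y z : A, imp (arr x y) (imp (arr z x) (arr z y)) = top)
    (s4 : ∀ x : A, arr top x = x)
    (s5 : ∀ x y z : A, arr x y = top → imp y z = top → arr x z = top) (x : A) :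
    imp x x = top := by
  have h := imp_arr_imp_eq_top s3 s4 top x
  rw [s4, s2] at h
  exact eq_top_of_imp_top_eq_top s4 s5 h

theorem imp_eq_top_of_arr_eq_top (s3 : ∀ x y z : A, imp (arr x y) (imp (arr z x) (arr z y)) = top)
    (s4 : ∀ x : A, arr top x = x)
    (s5 : ∀ x y z : A, arr x y = top → imp y z = top → arr x z = top)
    {x y : A} (h : arr x y = top) : imp x y = top := by
  have h' := imp_arr_imp_eq_top s3 s4 x y
  rw [h] at h'
  exact eq_top_of_imp_top_eq_top s4 s5 h'

theorem imp_arr_arr_right_eq_top (s3 : ∀ x y z : A, imp (arr x y) (imp (arr z x) (arr z y)) = top)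
    (s4 : ∀ x : A, arr top x = x)
    (s5 : ∀ x y z : A, arr x y = top → imp y z = top → arr x z = top)
    {x y : A} (h : arr x y = top) (z : A) : imp (arr z x) (arr z y) = top := by
  have h' := s3 x y z
  rw [h] at h'
  exact eq_top_of_imp_top_eq_top s4 s5 h'

theorem imp_arr_arr_left_eq_top (s2 : ∀ x y z : A, imp x (imp y z) = imp y (imp x z))
    (s3 : ∀ x y z : A, imp (arr x y) (imp (arr z x) (arr z y)) = top)
    (s4 : ∀ x : A, arr top x = x)
    (s5 : ∀ x y z : A, arr x y = top → imp y z = top → arr x z = top)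
    {x y : A} (h : arr x y = top) (z : A) : imp (arr y z) (arr x z) = top := by
  have h' := s3 y z x
  rw [s2, h] at h'
  exact eq_top_of_imp_top_eq_top s4 s5 h'

theorem arr_trans (s3 : ∀ x y z : A, imp (arr x y) (imp (arr z x) (arr z y)) = top)
    (s4 : ∀ x : A, arr top x = x)
    (s5 : ∀ x y z : A, arr x y = top → imp y z = top → arr x z = top)
    {x y z : A} (hxy : arr x y = top) (hyz : arr y z = top) : arr x z = top := by
  have h := imp_arr_arr_right_eq_top s3 s4 s5 hyz x
  rw [hxy] at h
  exact eq_top_of_imp_top_eq_top s4 s5 h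

theorem arr_antisymm (s3 : ∀ x y z : A, imp (arr x y) (imp (arr z x) (arr z y)) = top)
    (s4 : ∀ x : A, arr top x = x)
    (s5 : ∀ x y z : A, arr x y = top → imp y z = top → arr x z = top)
    (s7 : ∀ x y : A, imp x y = top → imp y x = top → x = y)
    {x y : A} (hxy : arr x y = top) (hyx : arr y x = top) : x = y :=
  s7 x y (imp_eq_top_of_arr_eq_top s3 s4 s5 hxy) (imp_eq_top_of_arr_eq_top s3 s4 s5 hyx)

theorem imp_arr_imp_arr_arr_eq_top (s2 : ∀ x y z : A, imp x (imp y z) = imp y (imp x z))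
    (s3 : ∀ x y z : A, imp (arr x y) (imp (arr z x) (arr z y)) = top) (x y z : A) :
    imp (arr y z) (imp (arr z x) (arr y x)) = top := by
  rw [s2]
  exact s3 z x y

theorem imp_imp_imp_eq_top (s2 : ∀ x y z : A, imp x (imp y z) = imp y (imp x z))
    (s3 : ∀ x y z : A, imp (arr x y) (imp (arr z x) (arr z y)) = top)
    (s4 : ∀ x : A, arr top x = x)
    (s5 : ∀ x y z : A, arr x y = top → imp y z = top → arr x z = top) (x y : A) :
    imp x (imp (imp x y) y) = top := by
  rw [s2]
  exact imp_self_eq_top s2 s3 s4 s5 (imp x y)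

theorem arr_arr_arr_eq_top_of_arr_eq_top (s4 : ∀ x : A, arr top x = x) {x y : A}
    (h : arr x y = top) : arr x (arr (arr x y) y) = top := by
  rw [h, s4, h]

end SemiBCI

theorem stmt_15_general {A : Type*} (arr : A → A → A) (imp : A → A → A) (top : A)
    (s2 : ∀ x y z : A, imp x (imp y z) = imp y (imp x z))
    (s3 : ∀ x y z : A, imp (arr x y) (imp (arr z x) (arr z y)) = top)
    (s4 : ∀ x : A, arr top x = x)
    (s5 : ∀ x y z : A, arr x y = top → imp y z = top → arr x z = top)
    (s7 : ∀ x y : A, imp x y = top → imp y x = top → x = y) :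
    -- (SBCI8)
    (∀ x y z : A, arr x y = top → arr y z = top → arr x z = top) ∧
    -- (SBCI9)
    (∀ x y : A, arr x y = top → arr y x = top → x = y) ∧
    -- (SBCI10)
    (∀ x y z : A, imp (arr y z) (imp (arr z x) (arr y x)) = top) ∧
    -- (SBCI11)
    (∀ x : A, imp top x = top → x = top) ∧
    -- (SBCI12)
    (∀ x : A, imp x x = top) ∧
    -- (SBCI13)
    (∀ x y : A, arr x y = top → imp x y = top) ∧
    -- (SBCI14)
    (∀ x y : A, imp (arr x y) (imp x y) = top) ∧
    -- (SBCI15)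
    (∀ x y : A, imp x (imp (imp x y) y) = top) ∧
    -- (SBCI16)
    (∀ x y : A, arr x y = top → arr x (arr (arr x y) y) = top) ∧
    -- (SBCI17)
    (∀ x y z : A, arr x y = top → imp (arr z x) (arr z y) = top) ∧
    -- (SBCI18)
    (∀ x y z : A, arr x y = top → imp (arr y z) (arr x z) = top) :=
  ⟨fun _ _ _ => arr_trans s3 s4 s5,
    fun _ _ => arr_antisymm s3 s4 s5 s7,
    imp_arr_imp_arr_arr_eq_top s2 s3,
    fun _ => eq_top_of_imp_top_eq_top s4 s5,
    imp_self_eq_top s2 s3 s4 s5,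
    fun _ _ => imp_eq_top_of_arr_eq_top s3 s4 s5,
    imp_arr_imp_eq_top s3 s4,
    imp_imp_imp_eq_top s2 s3 s4 s5,
    fun _ _ => arr_arr_arr_eq_top_of_arr_eq_top s4,
    fun _ _ z h => imp_arr_arr_right_eq_top s3 s4 s5 h z,
    fun _ _ z h => imp_arr_arr_left_eq_top s2 s3 s4 s5 h z⟩

/-- properties SBCI8–SBCI18 of Semi-BCI algebras (A, ↠, →, ⊤),
where x ≪ y iff x↠y = ⊤ and x ⪯ y iff x→y = ⊤. -/
theorem stmt_15 {A : Type*} (arr : A → A → A) (imp : A → A → A) (top : A)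
    (s1 : ∀ x y z : A, arr x (arr y z) = arr y (arr x z))
    (s2 : ∀ x y z : A, imp x (imp y z) = imp y (imp x z))
    (s3 : ∀ x y z : A, imp (arr x y) (imp (arr z x) (arr z y)) = top)
    (s4 : ∀ x : A, arr top x = x)
    (s5 : ∀ x y z : A, arr x y = top → imp y z = top → arr x z = top)
    (s6 : ∀ x y z : A, imp x y = top → arr y z = top → arr x z = top)
    (s7 : ∀ x y : A, imp x y = top → imp y x = top → x = y) :
    -- (SBCI8)
    (∀ x y z : A, arr x y = top → arr y z = top → arr x z = top) ∧
    -- (SBCI9)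
    (∀ x y : A, arr x y = top → arr y x = top → x = y) ∧
    -- (SBCI10)
    (∀ x y z : A, imp (arr y z) (imp (arr z x) (arr y x)) = top) ∧
    -- (SBCI11)
    (∀ x : A, imp top x = top → x = top) ∧
    -- (SBCI12)
    (∀ x : A, imp x x = top) ∧
    -- (SBCI13)
    (∀ x y : A, arr x y = top → imp x y = top) ∧
    -- (SBCI14)
    (∀ x y : A, imp (arr x y) (imp x y) = top) ∧
    -- (SBCI15)
    (∀ x y : A, imp x (imp (imp x y) y) = top) ∧
    -- (SBCI16)
    (∀ x y : A, arr x y = top → arr x (arr (arr x y) y) = top) ∧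
    -- (SBCI17)
    (∀ x y z : A, arr x y = top → imp (arr z x) (arr z y) = top) ∧
    -- (SBCI18)
    (∀ x y z : A, arr x y = top → imp (arr y z) (arr x z) = top) :=
  stmt_15_general arr imp top s2 s3 s4 s5 s7
end

section
/- Let (A, ↠, →, ⊤) be a Semi-BCI algebra, with x ≪ y iff x↠y = ⊤ and x ⪯ y iff x→y = ⊤. Then the relations ≪ and ⪯ coincide (for all x, y: x ≪ y iff x ⪯ y) if and only if ≪ is reflexive (x ≪ x for all x ∈ A). -/
/-! Specialising (SBCI3) at `z = ⊤` and cancelling `⊤ ↠ _` by (SBCI4) gives `(x ↠ y) ⪯ (x → y)` and,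
after (SBCI2), `⊤ ⪯ (y → y)`. If `≪` is reflexive, (SBCI6) turns `⪯` into `≪` and, applied to the
first fact with `x ↠ y = ⊤`, gives `⊤ ≪ (x → y)`, i.e. `x → y = ⊤`. Conversely, if the relations
coincide, the second fact gives `⊤ ≪ (y → y)`, so `y ⪯ y`, so `y ≪ y`. -/

section SemiBCI

variable {A : Type*} {arr imp : A → A → A} {top : A}

theorem imp_top_imp_self_eq_top (s2 : ∀ x y z : A, imp x (imp y z) = imp y (imp x z))
    (s3 : ∀ x y z : A, imp (arr x y) (imp (arr z x) (arr z y)) = top)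
    (s4 : ∀ x : A, arr top x = x) (y : A) : imp top (imp y y) = top := by
  simpa only [s4, s2 top y y] using s3 top y top

theorem arr_eq_top_iff_imp_eq_top_of_arr_self
    (s3 : ∀ x y z : A, imp (arr x y) (imp (arr z x) (arr z y)) = top)
    (s4 : ∀ x : A, arr top x = x)
    (s6 : ∀ x y z : A, imp x y = top → arr y z = top → arr x z = top)
    (refl : ∀ x : A, arr x x = top) (x y : A) : arr x y = top ↔ imp x y = top := by
  constructor
  · intro hxy
    have h : imp top (imp x y) = top := hxy ▸ imp_arr_imp_eq_top s3 s4 x y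
    simpa only [s4] using s6 _ _ _ h (refl _)
  · intro hxy
    exact s6 x y y hxy (refl y)

theorem arr_self_eq_top_of_arr_iff_imp (s2 : ∀ x y z : A, imp x (imp y z) = imp y (imp x z))
    (s3 : ∀ x y z : A, imp (arr x y) (imp (arr z x) (arr z y)) = top)
    (s4 : ∀ x : A, arr top x = x) (h : ∀ x y : A, arr x y = top ↔ imp x y = top) (x : A) :
    arr x x = top := by
  have htop : arr top (imp x x) = top := (h _ _).mpr (imp_top_imp_self_eq_top s2 s3 s4 x)
  rw [s4] at htop
  exact (h x x).mpr htop

end SemiBCI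

theorem stmt_16_general {A : Type*} (arr : A → A → A) (imp : A → A → A) (top : A)
    (s2 : ∀ x y z : A, imp x (imp y z) = imp y (imp x z))
    (s3 : ∀ x y z : A, imp (arr x y) (imp (arr z x) (arr z y)) = top)
    (s4 : ∀ x : A, arr top x = x)
    (s6 : ∀ x y z : A, imp x y = top → arr y z = top → arr x z = top) :
    (∀ x y : A, arr x y = top ↔ imp x y = top) ↔ (∀ x : A, arr x x = top) :=
  ⟨arr_self_eq_top_of_arr_iff_imp s2 s3 s4, arr_eq_top_iff_imp_eq_top_of_arr_self s3 s4 s6⟩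

/-- In a Semi-BCI algebra (A, ↠, →, ⊤), the relations
≪ (x ≪ y iff x↠y = ⊤) and ⪯ (x ⪯ y iff x→y = ⊤) coincide if and only if
≪ is reflexive. -/
theorem stmt_16 {A : Type*} (arr : A → A → A) (imp : A → A → A) (top : A)
    (s1 : ∀ x y z : A, arr x (arr y z) = arr y (arr x z))
    (s2 : ∀ x y z : A, imp x (imp y z) = imp y (imp x z))
    (s3 : ∀ x y z : A, imp (arr x y) (imp (arr z x) (arr z y)) = top)
    (s4 : ∀ x : A, arr top x = x)
    (s5 : ∀ x y z : A, arr x y = top → imp y z = top → arr x z = top)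
    (s6 : ∀ x y z : A, imp x y = top → arr y z = top → arr x z = top)
    (s7 : ∀ x y : A, imp x y = top → imp y x = top → x = y) :
    (∀ x y : A, arr x y = top ↔ imp x y = top) ↔ (∀ x : A, arr x x = top) :=
  stmt_16_general arr imp top s2 s3 s4 s6
end

section
/- Let (A, →₁, ⊤) and (A, →₂, ⊤) be BCI-algebras on the same carrier with induced orders ≤₁ and ≤₂ (x ≤ᵢ y iff x →ᵢ y = ⊤). Suppose: (i) ≤₂ extends ≤₁ (x ≤₁ y implies x ≤₂ y); (ii) x→₁y ≤₂ x→₂y for all x, y; and (iii) for all w, x, y, z: if w ≤₂ x, x ≤₁ y, and y ≤₂ z, then w ≤₁ z. Then (A, →₁, →₂, ⊤), with ↠ := →₁ and → := →₂, is a Semi-BCI algebra. -/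
/-!
The two exchange laws and `⊤ ↠ x = x` are general facts about BCI-algebras, and (SBCI7) is
antisymmetry of `≤₂`. The mixed transitivity laws (SBCI5), (SBCI6) are instances of (iii) with one
of its `≤₂`-steps taken to be reflexivity. For (SBCI3), the BCI axiom (C-1) of `→₁` together with
exchange gives `x →₁ y ≤₁ (z →₁ x) →₁ (z →₁ y)`; this transfers to `≤₂` and is then composed with
(ii) applied to `z →₁ x` and `z →₁ y`.
-/

structure IsBCI {A : Type*} (imp : A → A → A) (top : A) : Prop where
  imp_imp_imp : ∀ x y z : A, imp (imp y z) (imp (imp z x) (imp y x)) = top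
  imp_imp_self : ∀ x y : A, imp x (imp (imp x y) y) = top
  imp_self : ∀ x : A, imp x x = top
  antisymm : ∀ x y : A, imp x y = top → imp y x = top → x = y

namespace IsBCI

variable {A : Type*} {imp : A → A → A} {top : A}

theorem eq_top_of_top_imp_eq_top (h : IsBCI imp top) {b : A} (hb : imp top b = top) :
    b = top := by
  have hb' := h.imp_imp_self b b
  rw [h.imp_self b, hb] at hb'
  exact (h.antisymm top b hb hb').symm

theorem top_imp (h : IsBCI imp top) (x : A) : imp top x = x := by
  have hx := h.imp_imp_self x x
  rw [h.imp_self x] at hx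
  exact h.antisymm _ _ (h.eq_top_of_top_imp_eq_top (h.imp_imp_self top x)) hx

theorem imp_anti (h : IsBCI imp top) {a b : A} (c : A) (hab : imp a b = top) :
    imp (imp b c) (imp a c) = top := by
  have habc := h.imp_imp_imp c a b
  rw [hab] at habc
  exact h.eq_top_of_top_imp_eq_top habc

theorem le_trans (h : IsBCI imp top) {a b c : A} (hab : imp a b = top) (hbc : imp b c = top) :
    imp a c = top := by
  have hac := h.imp_anti c hab
  rw [hbc] at hac
  exact h.eq_top_of_top_imp_eq_top hac

theorem imp_comm (h : IsBCI imp top) (x y z : A) : imp x (imp y z) = imp y (imp x z) := by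
  have key : ∀ x y z : A, imp (imp x (imp y z)) (imp y (imp x z)) = top := fun x y z =>
    h.le_trans (h.imp_imp_imp z x (imp y z)) (h.imp_anti (imp x z) (h.imp_imp_self y z))
  exact h.antisymm _ _ (key x y z) (key y x z)

end IsBCI

theorem stmt_17_general {A : Type*} (imp1 imp2 : A → A → A) (top : A)
    (c1₁ : ∀ x y z : A, imp1 (imp1 y z) (imp1 (imp1 z x) (imp1 y x)) = top)
    (c2₁ : ∀ x y : A, imp1 x (imp1 (imp1 x y) y) = top)
    (c3₁ : ∀ x : A, imp1 x x = top)
    (c4₁ : ∀ x y : A, imp1 x y = top → imp1 y x = top → x = y)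
    (c1₂ : ∀ x y z : A, imp2 (imp2 y z) (imp2 (imp2 z x) (imp2 y x)) = top)
    (c2₂ : ∀ x y : A, imp2 x (imp2 (imp2 x y) y) = top)
    (c3₂ : ∀ x : A, imp2 x x = top)
    (c4₂ : ∀ x y : A, imp2 x y = top → imp2 y x = top → x = y)
    (himp : ∀ x y : A, imp2 (imp1 x y) (imp2 x y) = top)
    (hmix : ∀ w x y z : A, imp2 w x = top → imp1 x y = top → imp2 y z = top →
      imp1 w z = top) :
    -- (SBCI1)
    (∀ x y z : A, imp1 x (imp1 y z) = imp1 y (imp1 x z)) ∧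
    -- (SBCI2)
    (∀ x y z : A, imp2 x (imp2 y z) = imp2 y (imp2 x z)) ∧
    -- (SBCI3)
    (∀ x y z : A, imp2 (imp1 x y) (imp2 (imp1 z x) (imp1 z y)) = top) ∧
    -- (SBCI4)
    (∀ x : A, imp1 top x = x) ∧
    -- (SBCI5)
    (∀ x y z : A, imp1 x y = top → imp2 y z = top → imp1 x z = top) ∧
    -- (SBCI6)
    (∀ x y z : A, imp2 x y = top → imp1 y z = top → imp1 x z = top) ∧
    -- (SBCI7)
    (∀ x y : A, imp2 x y = top → imp2 y x = top → x = y) := by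
  have h₁ : IsBCI imp1 top := ⟨c1₁, c2₁, c3₁, c4₁⟩
  have h₂ : IsBCI imp2 top := ⟨c1₂, c2₂, c3₂, c4₂⟩
  -- `x ≤₁ y` turns (ii) into `⊤ ≤₂ x →₂ y`.
  have le₂_of_le₁ : ∀ {x y : A}, imp1 x y = top → imp2 x y = top := fun {x y} hxy =>
    h₂.eq_top_of_top_imp_eq_top (hxy ▸ himp x y)
  refine ⟨h₁.imp_comm, h₂.imp_comm, fun x y z => ?_, h₁.top_imp,
    fun x y z hxy hyz => hmix x x y z (c3₂ x) hxy hyz,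
    fun x y z hxy hyz => hmix x y z z hxy hyz (c3₂ z), c4₂⟩
  have hle₁ : imp1 (imp1 x y) (imp1 (imp1 z x) (imp1 z y)) = top := by
    rw [h₁.imp_comm]
    exact c1₁ y z x
  exact h₂.le_trans (le₂_of_le₁ hle₁) (himp _ _)

/-- If (A, →₁, ⊤) and (A, →₂, ⊤) are BCI-algebras such that
(i) ≤₂ extends ≤₁, (ii) x→₁y ≤₂ x→₂y, and (iii) w ≤₂ x ≤₁ y ≤₂ z implies
w ≤₁ z, then (A, →₁, →₂, ⊤) is a Semi-BCI algebra (with ↠ := →₁, → := →₂).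
Here x ≤ᵢ y iff x →ᵢ y = ⊤. -/
theorem stmt_17 {A : Type*} (imp1 imp2 : A → A → A) (top : A)
    (c1₁ : ∀ x y z : A, imp1 (imp1 y z) (imp1 (imp1 z x) (imp1 y x)) = top)
    (c2₁ : ∀ x y : A, imp1 x (imp1 (imp1 x y) y) = top)
    (c3₁ : ∀ x : A, imp1 x x = top)
    (c4₁ : ∀ x y : A, imp1 x y = top → imp1 y x = top → x = y)
    (c1₂ : ∀ x y z : A, imp2 (imp2 y z) (imp2 (imp2 z x) (imp2 y x)) = top)
    (c2₂ : ∀ x y : A, imp2 x (imp2 (imp2 x y) y) = top)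
    (c3₂ : ∀ x : A, imp2 x x = top)
    (c4₂ : ∀ x y : A, imp2 x y = top → imp2 y x = top → x = y)
    (hext : ∀ x y : A, imp1 x y = top → imp2 x y = top)
    (himp : ∀ x y : A, imp2 (imp1 x y) (imp2 x y) = top)
    (hmix : ∀ w x y z : A, imp2 w x = top → imp1 x y = top → imp2 y z = top →
      imp1 w z = top) :
    -- (SBCI1)
    (∀ x y z : A, imp1 x (imp1 y z) = imp1 y (imp1 x z)) ∧
    -- (SBCI2)
    (∀ x y z : A, imp2 x (imp2 y z) = imp2 y (imp2 x z)) ∧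
    -- (SBCI3)
    (∀ x y z : A, imp2 (imp1 x y) (imp2 (imp1 z x) (imp1 z y)) = top) ∧
    -- (SBCI4)
    (∀ x : A, imp1 top x = x) ∧
    -- (SBCI5)
    (∀ x y z : A, imp1 x y = top → imp2 y z = top → imp1 x z = top) ∧
    -- (SBCI6)
    (∀ x y z : A, imp2 x y = top → imp1 y z = top → imp1 x z = top) ∧
    -- (SBCI7)
    (∀ x y : A, imp2 x y = top → imp2 y x = top → x = y) :=
  stmt_17_general imp1 imp2 top c1₁ c2₁ c3₁ c4₁ c1₂ c2₂ c3₂ c4₂ himp hmix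
end

section
/- Let (A, ↠, →, ⊤) be a Semi-BCI algebra with relations x ≪ y iff x↠y = ⊤ and x ⪯ y iff x→y = ⊤. Suppose that (A, ⪯, →, ↠, ⊤) is also a pseudo-BCI algebra, i.e., for all x, y, z ∈ A: (PB-1) x→y ⪯ (y→z)↠(x→z); (PB-2) x↠y ⪯ (y↠z)→(x↠z); (PB-3) x ⪯ (x→y)↠y; (PB-4) x ⪯ (x↠y)→y; (PB-5) x ⪯ x; (PB-6) if x ⪯ y and y ⪯ x then x = y; (PB-7) x ⪯ y iff x→y = ⊤ iff x↠y = ⊤. Then x↠y = x→y for all x, y ∈ A, and (A, →, ⊤) is a BCI-algebra. -/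
/-! Exchange turns (PB-4) into `x ↠ y ⪯ x → y` and, through (PB-7), (PB-3) into
`x → y ≪ x ↠ y`, i.e. `x → y ⪯ x ↠ y`; antisymmetry makes the two arrows equal. Once they
are, (C-1) is (PB-1) and (C-2) is (PB-4). -/

theorem arr_eq_imp_of_exchange {A : Type*} {arr imp : A → A → A} {top : A}
    (arr_exchange : ∀ x y z : A, arr x (arr y z) = arr y (arr x z))
    (imp_exchange : ∀ x y z : A, imp x (imp y z) = imp y (imp x z))
    (le_imp_arr : ∀ x y : A, imp x (arr (imp x y) y) = top)
    (le_arr_imp : ∀ x y : A, imp x (imp (arr x y) y) = top)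
    (antisymm : ∀ x y : A, imp x y = top → imp y x = top → x = y)
    (imp_eq_top_iff : ∀ x y : A, imp x y = top ↔ arr x y = top) :
    arr = imp := by
  funext x y
  have arr_le_imp : imp (arr x y) (imp x y) = top := by
    rw [imp_exchange]
    exact le_arr_imp x y
  have imp_le_arr : imp (imp x y) (arr x y) = top := by
    rw [imp_eq_top_iff, arr_exchange, ← imp_eq_top_iff]
    exact le_imp_arr x y
  exact antisymm _ _ arr_le_imp imp_le_arr

theorem stmt_19_general {A : Type*} (arr : A → A → A) (imp : A → A → A) (top : A)
    (s1 : ∀ x y z : A, arr x (arr y z) = arr y (arr x z))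
    (s2 : ∀ x y z : A, imp x (imp y z) = imp y (imp x z))
    -- (PB-1): x→y ⪯ (y→z)↠(x→z)
    (pb1 : ∀ x y z : A, imp (imp x y) (arr (imp y z) (imp x z)) = top)
    -- (PB-3): x ⪯ (x→y)↠y
    (pb3 : ∀ x y : A, imp x (arr (imp x y) y) = top)
    -- (PB-4): x ⪯ (x↠y)→y
    (pb4 : ∀ x y : A, imp x (imp (arr x y) y) = top)
    -- (PB-5): x ⪯ x
    (pb5 : ∀ x : A, imp x x = top)
    -- (PB-6): antisymmetry of ⪯
    (pb6 : ∀ x y : A, imp x y = top → imp y x = top → x = y)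
    -- (PB-7): x ⪯ y iff x→y = ⊤ iff x↠y = ⊤
    (pb7 : ∀ x y : A, imp x y = top ↔ arr x y = top) :
    (∀ x y : A, arr x y = imp x y) ∧
    -- (C-1)
    (∀ x y z : A, imp (imp y z) (imp (imp z x) (imp y x)) = top) ∧
    -- (C-2)
    (∀ x y : A, imp x (imp (imp x y) y) = top) ∧
    -- (C-3)
    (∀ x : A, imp x x = top) ∧
    -- (C-4)
    (∀ x y : A, imp x y = top → imp y x = top → x = y) := by
  obtain rfl : arr = imp := arr_eq_imp_of_exchange s1 s2 pb3 pb4 pb6 pb7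
  exact ⟨fun _ _ => rfl, fun x y z => pb1 y z x, pb4, pb5, pb6⟩

/-- If (A, ↠, →, ⊤) is a Semi-BCI algebra which is also a
pseudo-BCI algebra (A, ⪯, →, ↠, ⊤) — where x ⪯ y iff x→y = ⊤ — then
↠ and → coincide and (A, →, ⊤) is a BCI-algebra. -/
theorem stmt_19 {A : Type*} (arr : A → A → A) (imp : A → A → A) (top : A)
    (s1 : ∀ x y z : A, arr x (arr y z) = arr y (arr x z))
    (s2 : ∀ x y z : A, imp x (imp y z) = imp y (imp x z))
    (s3 : ∀ x y z : A, imp (arr x y) (imp (arr z x) (arr z y)) = top)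
    (s4 : ∀ x : A, arr top x = x)
    (s5 : ∀ x y z : A, arr x y = top → imp y z = top → arr x z = top)
    (s6 : ∀ x y z : A, imp x y = top → arr y z = top → arr x z = top)
    (s7 : ∀ x y : A, imp x y = top → imp y x = top → x = y)
    -- (PB-1): x→y ⪯ (y→z)↠(x→z)
    (pb1 : ∀ x y z : A, imp (imp x y) (arr (imp y z) (imp x z)) = top)
    -- (PB-2): x↠y ⪯ (y↠z)→(x↠z)
    (pb2 : ∀ x y z : A, imp (arr x y) (imp (arr y z) (arr x z)) = top)
    -- (PB-3): x ⪯ (x→y)↠y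
    (pb3 : ∀ x y : A, imp x (arr (imp x y) y) = top)
    -- (PB-4): x ⪯ (x↠y)→y
    (pb4 : ∀ x y : A, imp x (imp (arr x y) y) = top)
    -- (PB-5): x ⪯ x
    (pb5 : ∀ x : A, imp x x = top)
    -- (PB-6): antisymmetry of ⪯
    (pb6 : ∀ x y : A, imp x y = top → imp y x = top → x = y)
    -- (PB-7): x ⪯ y iff x→y = ⊤ iff x↠y = ⊤
    (pb7 : ∀ x y : A, imp x y = top ↔ arr x y = top) :
    (∀ x y : A, arr x y = imp x y) ∧
    -- (C-1)
    (∀ x y z : A, imp (imp y z) (imp (imp z x) (imp y x)) = top) ∧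
    -- (C-2)
    (∀ x y : A, imp x (imp (imp x y) y) = top) ∧
    -- (C-3)
    (∀ x : A, imp x x = top) ∧
    -- (C-4)
    (∀ x y : A, imp x y = top → imp y x = top → x = y) :=
  stmt_19_general arr imp top s1 s2 pb1 pb3 pb4 pb5 pb6 pb7
end
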